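/- arXiv:1801.04447 — 7 statements merged into one kernel-verified Lean document; each statement's English description precedes it below -/
import Mathlib

section
/- Every horizontal line in ℍ₁ whose direction has unit planar part can be written in the standard form: if γ(s) = (a + sA, b + sB, c + sC) is a line with A² + B² = 1 satisfying the horizontality condition z' − x'y + xy' = 0 along γ, then there exist real numbers p ≥ 0, θ ∈ [0, 2π), and t ∈ ℝ such that the image of γ equals the image of the curve s ↦ (p cos θ − s sin θ, p sin θ + s cos θ, t − s·p). -/
/-!
Horizontality of an affine line forces `C = A b - a B`, i.e. the vertical slope is minus the
signed distance of the planar line from the origin. Choosing the orientation `ε = ±1` that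
makes `p = -ε C ≥ 0`, starting the parametrisation at the foot of the perpendicular from the
origin (parameter `-(a A + b B)`), and taking `θ` with `(cos θ, sin θ) = ε (B, -A)` turns `γ`
into `ℓ(p, θ, t)` after an affine change of parameter.
-/

open Real

theorem exists_mem_Ico_cos_eq_sin_eq {x y : ℝ} (h : x ^ 2 + y ^ 2 = 1) :
    ∃ θ ∈ Set.Ico 0 (2 * π), cos θ = x ∧ sin θ = y := by
  set z : ℂ := ⟨x, y⟩
  have hz : ‖z‖ = 1 := by rw [Complex.norm_eq_sqrt_sq_add_sq, h, sqrt_one]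
  have hz0 : z ≠ 0 := norm_ne_zero_iff.mp (by simp [hz])
  refine ⟨toIcoMod two_pi_pos 0 z.arg, by simpa using toIcoMod_mem_Ico two_pi_pos 0 z.arg,
    ?_, ?_⟩
  · rw [← self_sub_toIcoDiv_zsmul, cos_periodic.sub_zsmul_eq, Complex.cos_arg hz0, hz, div_one]
  · rw [← self_sub_toIcoDiv_zsmul, sin_periodic.sub_zsmul_eq, Complex.sin_arg, hz, div_one]

theorem surjective_mul_sub {ε : ℝ} (hε : ε ^ 2 = 1) (k : ℝ) :
    Function.Surjective fun s : ℝ => ε * s - k :=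
  fun u => ⟨ε * (u + k), by linear_combination (u + k) * hε⟩

noncomputable def horizontalLine (p θ t : ℝ) (s : ℝ) : ℝ × ℝ × ℝ :=
  (p * cos θ - s * sin θ, p * sin θ + s * cos θ, t - s * p)

theorem horizontalLine_eq_comp {a b c A B C ε θ : ℝ} (hAB : A ^ 2 + B ^ 2 = 1)
    (hC : C = A * b - a * B) (hε : ε ^ 2 = 1) (hcos : cos θ = ε * B)
    (hsin : sin θ = -(ε * A)) :
    horizontalLine (-(ε * C)) θ (c - (a * A + b * B) * C) =
      (fun s => (a + s * A, b + s * B, c + s * C)) ∘ fun s => ε * s - (a * A + b * B) := by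
  funext s
  simp only [horizontalLine, hcos, hsin, Function.comp_apply, Prod.mk.injEq]
  refine ⟨?_, ?_, by ring⟩
  · linear_combination a * hAB - B * hC - C * B * hε
  · linear_combination b * hAB + A * hC + C * A * hε

/-- Every horizontal line with unit planar direction can be written in the standard
form ℓ(p,θ,t) with p ≥ 0 and θ ∈ [0,2π). -/
theorem horizontal_line_standard_form (A B C a b c : ℝ) (hAB : A ^ 2 + B ^ 2 = 1)
    (hhor : ∀ s : ℝ,
      deriv (fun s : ℝ => c + s * C) s
        - deriv (fun s : ℝ => a + s * A) s * (b + s * B)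
        + (a + s * A) * deriv (fun s : ℝ => b + s * B) s = 0) :
    ∃ p θ t : ℝ, 0 ≤ p ∧ θ ∈ Set.Ico (0 : ℝ) (2 * Real.pi) ∧
      Set.range (fun s : ℝ => (a + s * A, b + s * B, c + s * C)) =
        Set.range (fun s : ℝ =>
          (p * Real.cos θ - s * Real.sin θ,
           p * Real.sin θ + s * Real.cos θ,
           t - s * p)) := by
  have hC : C = A * b - a * B := by
    have h0 := hhor 0
    simp only [deriv_const_add', deriv_mul_const_field', deriv_id''] at h0
    linarith
  obtain ⟨ε, hε, hp⟩ : ∃ ε : ℝ, ε ^ 2 = 1 ∧ 0 ≤ -(ε * C) := by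
    rcases le_or_gt C 0 with hC0 | hC0
    exacts [⟨1, by norm_num, by linarith⟩, ⟨-1, by norm_num, by linarith⟩]
  obtain ⟨θ, hθ, hcos, hsin⟩ := exists_mem_Ico_cos_eq_sin_eq (x := ε * B) (y := -(ε * A))
    (by linear_combination (A ^ 2 + B ^ 2) * hε + hAB)
  refine ⟨-(ε * C), θ, c - (a * A + b * B) * C, hp, hθ, ?_⟩
  rw [← (surjective_mul_sub hε (a * A + b * B)).range_comp]
  exact congrArg Set.range (horizontalLine_eq_comp hAB hC hε hcos hsin).symm
end

section
/- Let p : ℝ → ℝ be twice differentiable and t : ℝ → ℝ be differentiable, and define the curve γ(θ) = (x(θ), y(θ), z(θ)) by x(θ) = p(θ)cos θ − p'(θ)sin θ, y(θ) = p(θ)sin θ + p'(θ)cos θ, z(θ) = t(θ) − p'(θ)p(θ). Then for every θ, z'(θ) − x'(θ)y(θ) + x(θ)y'(θ) = t'(θ) − (p'(θ))² + (p(θ))². -/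
/-!
Write `R θ` for the rotation by `θ`, so that `(x, y) = R θ (p, p')`. Differentiating,
`(x', y') = R θ (p' - p', p'' + p) = R θ (0, p + p'')`, and since rotations preserve the
determinant, `x y' - x' y = det ((p, p'), (0, p + p'')) = p (p + p'')`. Adding
`z' = t' - p'' p - p'²` leaves `t' - p'² + p²`.
-/

open Real

section RotatedPair

variable {f g : ℝ → ℝ} {f' g' θ : ℝ}

theorem hasDerivAt_mul_cos_sub_mul_sin (hf : HasDerivAt f f' θ) (hg : HasDerivAt g g' θ) :
    HasDerivAt (fun s => f s * cos s - g s * sin s)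
      ((f' - g θ) * cos θ - (g' + f θ) * sin θ) θ :=
  ((hf.fun_mul (hasDerivAt_cos θ)).fun_sub (hg.fun_mul (hasDerivAt_sin θ))).congr_deriv (by ring)

theorem hasDerivAt_mul_sin_add_mul_cos (hf : HasDerivAt f f' θ) (hg : HasDerivAt g g' θ) :
    HasDerivAt (fun s => f s * sin s + g s * cos s)
      ((f' - g θ) * sin θ + (g' + f θ) * cos θ) θ :=
  ((hf.fun_mul (hasDerivAt_sin θ)).fun_add (hg.fun_mul (hasDerivAt_cos θ))).congr_deriv (by ring)

end RotatedPair

theorem rotation_det_eq (a b u v θ : ℝ) :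
    (a * cos θ - b * sin θ) * (u * sin θ + v * cos θ)
      - (u * cos θ - v * sin θ) * (a * sin θ + b * cos θ) = a * v - b * u := by
  linear_combination (a * v - b * u) * sin_sq_add_cos_sq θ

/-- For the candidate envelope curve γ = (p cos θ − p' sin θ, p sin θ + p' cos θ, t − p'p),
one has z' − x'y + xy' = t' − (p')² + p². -/
theorem envelope_horizontality_defect (p t : ℝ → ℝ)
    (hp : Differentiable ℝ p) (hp' : Differentiable ℝ (deriv p))
    (ht : Differentiable ℝ t)
    (x y z : ℝ → ℝ)
    (hx : x = fun θ => p θ * Real.cos θ - deriv p θ * Real.sin θ)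
    (hy : y = fun θ => p θ * Real.sin θ + deriv p θ * Real.cos θ)
    (hz : z = fun θ => t θ - deriv p θ * p θ) :
    ∀ θ : ℝ,
      deriv z θ - deriv x θ * y θ + x θ * deriv y θ
        = deriv t θ - (deriv p θ) ^ 2 + (p θ) ^ 2 := by
  intro θ
  subst hx hy hz
  have hpθ := (hp θ).hasDerivAt
  have hp'θ := (hp' θ).hasDerivAt
  have hzθ : HasDerivAt (fun s => t s - deriv p s * p s)
      (deriv t θ - (deriv (deriv p) θ * p θ + deriv p θ * deriv p θ)) θ :=
    (ht θ).hasDerivAt.fun_sub (hp'θ.fun_mul hpθ)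
  rw [hzθ.deriv, (hasDerivAt_mul_cos_sub_mul_sin hpθ hp'θ).deriv,
    (hasDerivAt_mul_sin_add_mul_cos hpθ hp'θ).deriv]
  linear_combination rotation_det_eq (p θ) (deriv p θ) 0
    (deriv (deriv p) θ + p θ) θ
end

section
/- Let p : [0,2π] → ℝ be twice differentiable and t : [0,2π] → ℝ be differentiable with t'(θ) = (p'(θ))² − (p(θ))² for all θ. Then the curve γ(θ) = (p cos θ − p' sin θ, p sin θ + p' cos θ, t − p'p) is horizontal: z'(θ) − x'(θ)y(θ) + x(θ)y'(θ) = 0 for all θ ∈ [0,2π]. -/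
/-! With `x cos θ + y sin θ = p` and `-x sin θ + y cos θ = p'`, the velocity of the envelope
point is `(x', y') = (p + p'') (-sin θ, cos θ)`, so `x' y - x y' = -(p + p'') p`. Hence the
horizontality defect `z' - x' y + x y'` equals `t' - p'² + p²`, which vanishes by assumption. -/

open Real

section Envelope

variable {p q t : ℝ → ℝ} {θ r s : ℝ}

theorem hasDerivAt_envelope_x (hp : HasDerivAt p (q θ) θ) (hq : HasDerivAt q r θ) :
    HasDerivAt (fun θ => p θ * cos θ - q θ * sin θ) (-(p θ + r) * sin θ) θ :=
  ((hp.mul (hasDerivAt_cos θ)).sub (hq.mul (hasDerivAt_sin θ))).congr_deriv (by ring)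

theorem hasDerivAt_envelope_y (hp : HasDerivAt p (q θ) θ) (hq : HasDerivAt q r θ) :
    HasDerivAt (fun θ => p θ * sin θ + q θ * cos θ) ((p θ + r) * cos θ) θ :=
  ((hp.mul (hasDerivAt_sin θ)).add (hq.mul (hasDerivAt_cos θ))).congr_deriv (by ring)

theorem hasDerivAt_envelope_z (ht : HasDerivAt t s θ) (hp : HasDerivAt p (q θ) θ)
    (hq : HasDerivAt q r θ) :
    HasDerivAt (fun θ => t θ - q θ * p θ) (s - r * p θ - q θ ^ 2) θ :=
  (ht.sub (hq.mul hp)).congr_deriv (by ring)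

end Envelope

theorem envelope_horizontality_defect_s5 (a b r s θ : ℝ) :
    (s - r * a - b ^ 2) - -(a + r) * sin θ * (a * sin θ + b * cos θ)
      + (a * cos θ - b * sin θ) * ((a + r) * cos θ) = s - b ^ 2 + a ^ 2 := by
  linear_combination a * (a + r) * sin_sq_add_cos_sq θ

/-- If t' = (p')² − p² on [0,2π], then the envelope curve
γ = (p cos θ − p' sin θ, p sin θ + p' cos θ, t − p'p) is horizontal on [0,2π]. -/
theorem envelope_is_horizontal (p t : ℝ → ℝ)
    (hp : Differentiable ℝ p) (hp' : Differentiable ℝ (deriv p))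
    (ht : Differentiable ℝ t)
    (hcond : ∀ θ ∈ Set.Icc (0 : ℝ) (2 * Real.pi),
      deriv t θ = (deriv p θ) ^ 2 - (p θ) ^ 2)
    (x y z : ℝ → ℝ)
    (hx : x = fun θ => p θ * Real.cos θ - deriv p θ * Real.sin θ)
    (hy : y = fun θ => p θ * Real.sin θ + deriv p θ * Real.cos θ)
    (hz : z = fun θ => t θ - deriv p θ * p θ) :
    ∀ θ ∈ Set.Icc (0 : ℝ) (2 * Real.pi),
      deriv z θ - deriv x θ * y θ + x θ * deriv y θ = 0 := by
  intro θ hθ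
  have hpθ := (hp θ).hasDerivAt
  have hqθ := (hp' θ).hasDerivAt
  subst hx hy hz
  rw [(hasDerivAt_envelope_z (ht θ).hasDerivAt hpθ hqθ).deriv,
    (hasDerivAt_envelope_x hpθ hqθ).deriv, (hasDerivAt_envelope_y hpθ hqθ).deriv,
    envelope_horizontality_defect_s5, hcond θ hθ]
  ring
end

section
/- Let x, y, z : [0,2π] → ℝ be differentiable functions such that the curve γ(θ) = (x(θ), y(θ), z(θ)) is horizontal, i.e. z'(θ) = x'(θ)y(θ) − x(θ)y'(θ) for all θ, and such that the planar tangent is aligned with the angle θ, i.e. x'(θ)cos θ + y'(θ)sin θ = 0 for all θ. Define p(θ) = x(θ)cos θ + y(θ)sin θ and t(θ) = z(θ) + (y(θ)cos θ − x(θ)sin θ)·p(θ). Then p'(θ) = y(θ)cos θ − x(θ)sin θ and t'(θ) = (p'(θ))² − (p(θ))² for all θ ∈ [0,2π]. -/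
/-- Converse construction: for a horizontal curve whose planar tangent is aligned with
the angle θ, the support function p = x cos θ + y sin θ and the height function
t = z + (y cos θ − x sin θ)·p satisfy p' = y cos θ − x sin θ and t' = (p')² − p². -/
theorem tangent_lines_support_function (x y z : ℝ → ℝ)
    (hx : Differentiable ℝ x) (hy : Differentiable ℝ y) (hz : Differentiable ℝ z)
    (hhor : ∀ θ ∈ Set.Icc (0 : ℝ) (2 * Real.pi),
      deriv z θ = deriv x θ * y θ - x θ * deriv y θ)
    (halign : ∀ θ ∈ Set.Icc (0 : ℝ) (2 * Real.pi),
      deriv x θ * Real.cos θ + deriv y θ * Real.sin θ = 0)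
    (p t : ℝ → ℝ)
    (hp : p = fun θ => x θ * Real.cos θ + y θ * Real.sin θ)
    (ht : t = fun θ => z θ + (y θ * Real.cos θ - x θ * Real.sin θ) * p θ) :
    ∀ θ ∈ Set.Icc (0 : ℝ) (2 * Real.pi),
      deriv p θ = y θ * Real.cos θ - x θ * Real.sin θ ∧
      deriv t θ = (deriv p θ) ^ 2 - (p θ) ^ 2 := by
  intro θ hθ
  have hx' := (hx θ).hasDerivAt
  have hy' := (hy θ).hasDerivAt
  have hz' := (hz θ).hasDerivAt
  have hc : HasDerivAt Real.cos (-Real.sin θ) θ := Real.hasDerivAt_cos θ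
  have hs : HasDerivAt Real.sin (Real.cos θ) θ := Real.hasDerivAt_sin θ
  have hal := halign θ hθ
  have hpd : HasDerivAt p (y θ * Real.cos θ - x θ * Real.sin θ) θ := by
    have h := ((hx'.mul hc).add (hy'.mul hs))
    rw [hp]
    refine h.congr_deriv ?_
    ring_nf
    nlinarith [hal]
  have hp' : deriv p θ = y θ * Real.cos θ - x θ * Real.sin θ := hpd.deriv
  refine ⟨hp', ?_⟩
  have hpval : p θ = x θ * Real.cos θ + y θ * Real.sin θ := by rw [hp]
  have htd : HasDerivAt t
      ((y θ * Real.cos θ - x θ * Real.sin θ)^2 - (p θ)^2) θ := by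
    have h := hz'.add
      (((hy'.mul hc).sub (hx'.mul hs)).mul hpd)
    rw [ht]
    refine h.congr_deriv ?_
    symm
    rw [hhor θ hθ, hpval, Pi.sub_apply, Pi.mul_apply, Pi.mul_apply]
    have hpy := Real.sin_sq_add_cos_sq θ
    linear_combination (x θ * Real.sin θ - y θ * Real.cos θ) * hal +
      (deriv x θ * y θ - deriv y θ * x θ) * hpy
  rw [htd.deriv, hp']
end

section
/- Let p₁, p₂ : [a,b] → ℝ be twice differentiable with p₁ > 0, p₂ > 0, satisfying p₁(θ)p₂(θ) = p₁'(θ)p₂'(θ) on [a,b]. If p₁' > 0, p₂' > 0, and p₂'' < 0 on [a,b], then p₁'' > 0 on [a,b]. -/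
/-! Differentiating `p₁ p₂ = p₁' p₂'` gives `p₁'' p₂' = p₁' p₂ + p₁ p₂' - p₁' p₂''`, whose right-hand
side is positive under the sign assumptions; dividing by `p₂' > 0` yields `p₁'' > 0`. -/

open Set

theorem deriv_eq_of_eqOn_of_uniqueDiffWithinAt {f g : ℝ → ℝ} {s : Set ℝ} {x : ℝ}
    (hs : UniqueDiffWithinAt ℝ s x) (hx : x ∈ s) (hf : DifferentiableAt ℝ f x)
    (hg : DifferentiableAt ℝ g x) (hfg : EqOn f g s) : deriv f x = deriv g x := by
  rw [← hf.derivWithin hs, ← hg.derivWithin hs]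
  exact derivWithin_congr hfg (hfg hx)

theorem deriv_mul_eq_deriv_mul_deriv_of_eqOn {p₁ p₂ : ℝ → ℝ} {s : Set ℝ} {x : ℝ}
    (hs : UniqueDiffWithinAt ℝ s x) (hx : x ∈ s)
    (hp₁ : DifferentiableAt ℝ p₁ x) (hp₁' : DifferentiableAt ℝ (deriv p₁) x)
    (hp₂ : DifferentiableAt ℝ p₂ x) (hp₂' : DifferentiableAt ℝ (deriv p₂) x)
    (hcond : EqOn (p₁ * p₂) (deriv p₁ * deriv p₂) s) :
    deriv p₁ x * p₂ x + p₁ x * deriv p₂ x =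
      deriv (deriv p₁) x * deriv p₂ x + deriv p₁ x * deriv (deriv p₂) x := by
  rw [← deriv_mul hp₁ hp₂, ← deriv_mul hp₁' hp₂']
  exact deriv_eq_of_eqOn_of_uniqueDiffWithinAt hs hx (hp₁.mul hp₂) (hp₁'.mul hp₂') hcond

/-- Classification of pairs of support functions with p₁p₂ = p₁'p₂': case (1). -/
theorem classification_case_10 (a b : ℝ) (hab : a < b) (p₁ p₂ : ℝ → ℝ)
    (hp₁ : Differentiable ℝ p₁) (hp₁' : Differentiable ℝ (deriv p₁))
    (hp₂ : Differentiable ℝ p₂) (hp₂' : Differentiable ℝ (deriv p₂))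
    (hpos₁ : ∀ θ ∈ Set.Icc a b, 0 < p₁ θ)
    (hpos₂ : ∀ θ ∈ Set.Icc a b, 0 < p₂ θ)
    (hcond : ∀ θ ∈ Set.Icc a b, p₁ θ * p₂ θ = deriv p₁ θ * deriv p₂ θ)
    (h₁ : ∀ θ ∈ Set.Icc a b, 0 < deriv p₁ θ)
    (h₂ : ∀ θ ∈ Set.Icc a b, 0 < deriv p₂ θ)
    (h₃ : ∀ θ ∈ Set.Icc a b, deriv (deriv p₂) θ < 0) :
    ∀ θ ∈ Set.Icc a b, 0 < deriv (deriv p₁) θ := by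
  intro θ hθ
  have hdiff := deriv_mul_eq_deriv_mul_deriv_of_eqOn (uniqueDiffOn_Icc hab θ hθ) hθ
    (hp₁ θ) (hp₁' θ) (hp₂ θ) (hp₂' θ) hcond
  have hrhs : 0 < deriv p₁ θ * p₂ θ + p₁ θ * deriv p₂ θ - deriv p₁ θ * deriv (deriv p₂) θ := by
    have := mul_pos (h₁ θ hθ) (hpos₂ θ hθ)
    have := mul_pos (hpos₁ θ hθ) (h₂ θ hθ)
    have := mul_pos (h₁ θ hθ) (neg_pos.mpr (h₃ θ hθ))
    linarith
  refine pos_of_mul_pos_left (b := deriv p₂ θ) ?_ (h₂ θ hθ).le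
  linarith
end

section
/- Let p₁, p₂ : [a,b] → ℝ be twice differentiable with p₁ > 0, p₂ > 0, satisfying p₁(θ)p₂(θ) = p₁'(θ)p₂'(θ) on [a,b]. If p₁' < 0, p₂' < 0, and p₂'' < 0 on [a,b], then p₁'' > 0 on [a,b]. -/
open Set

theorem deriv_eq_of_eqOn_Icc {f g : ℝ → ℝ} {a b x : ℝ} (hab : a < b)
    (hfg : EqOn f g (Icc a b)) (hx : x ∈ Icc a b)
    (hf : DifferentiableAt ℝ f x) (hg : DifferentiableAt ℝ g x) :
    deriv f x = deriv g x := by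
  rw [← hf.derivWithin (uniqueDiffOn_Icc hab x hx), ← hg.derivWithin (uniqueDiffOn_Icc hab x hx),
    derivWithin_congr hfg (hfg hx)]

/-- Classification of pairs of support functions with p₁p₂ = p₁'p₂': case (3). -/
theorem classification_case_12 (a b : ℝ) (hab : a < b) (p₁ p₂ : ℝ → ℝ)
    (hp₁ : Differentiable ℝ p₁) (hp₁' : Differentiable ℝ (deriv p₁))
    (hp₂ : Differentiable ℝ p₂) (hp₂' : Differentiable ℝ (deriv p₂))
    (hpos₁ : ∀ θ ∈ Set.Icc a b, 0 < p₁ θ)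
    (hpos₂ : ∀ θ ∈ Set.Icc a b, 0 < p₂ θ)
    (hcond : ∀ θ ∈ Set.Icc a b, p₁ θ * p₂ θ = deriv p₁ θ * deriv p₂ θ)
    (h₁ : ∀ θ ∈ Set.Icc a b, deriv p₁ θ < 0)
    (h₂ : ∀ θ ∈ Set.Icc a b, deriv p₂ θ < 0)
    (h₃ : ∀ θ ∈ Set.Icc a b, deriv (deriv p₂) θ < 0) :
    ∀ θ ∈ Set.Icc a b, 0 < deriv (deriv p₁) θ := by
  intro θ hθ
  -- The derivative of the compatibility condition: p₁'p₂ + p₁p₂' = p₁''p₂' + p₁'p₂''.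
  have hdiff := deriv_eq_of_eqOn_Icc hab (fun x hx => hcond x hx) hθ
    ((hp₁ θ).mul (hp₂ θ)) ((hp₁' θ).mul (hp₂' θ))
  rw [deriv_fun_mul (hp₁ θ) (hp₂ θ), deriv_fun_mul (hp₁' θ) (hp₂' θ)] at hdiff
  have hlhs : deriv p₁ θ * p₂ θ + p₁ θ * deriv p₂ θ < 0 :=
    add_neg (mul_neg_of_neg_of_pos (h₁ θ hθ) (hpos₂ θ hθ))
      (mul_neg_of_pos_of_neg (hpos₁ θ hθ) (h₂ θ hθ))
  have hterm : 0 < deriv p₁ θ * deriv (deriv p₂) θ := mul_pos_of_neg_of_neg (h₁ θ hθ) (h₃ θ hθ)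
  have hprod : deriv (deriv p₁) θ * deriv p₂ θ < 0 := by linarith
  exact pos_of_mul_neg_left hprod (h₂ θ hθ).le
end

section
/- Let p₂ : [a,b] → ℝ be continuously differentiable with p₂ > 0 and p₂' ≠ 0 on [a,b], and let p₁ : [a,b] → ℝ be differentiable with p₁(a) > 0. Then p₁(θ)p₂(θ) = p₁'(θ)p₂'(θ) for all θ ∈ [a,b] if and only if p₁(θ) = p₁(a) · exp(∫_a^θ p₂(α)/p₂'(α) dα) for all θ ∈ [a,b]. -/
/-- The condition p₁p₂ = p₁'p₂' on [a,b] is equivalent to the explicit formula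
p₁(θ) = p₁(a)·exp(∫ₐ^θ p₂/p₂'). -/
theorem compatibility_iff_exp_formula (a b : ℝ) (hab : a < b) (p₁ p₂ : ℝ → ℝ)
    (hp₂ : ContDiff ℝ 1 p₂)
    (hpos : ∀ θ ∈ Set.Icc a b, 0 < p₂ θ)
    (hne : ∀ θ ∈ Set.Icc a b, deriv p₂ θ ≠ 0)
    (hp₁ : Differentiable ℝ p₁) (ha : 0 < p₁ a) :
    (∀ θ ∈ Set.Icc a b, p₁ θ * p₂ θ = deriv p₁ θ * deriv p₂ θ)
    ↔ (∀ θ ∈ Set.Icc a b,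
        p₁ θ = p₁ a * Real.exp (∫ α in a..θ, p₂ α / deriv p₂ α)) := by
  set g : ℝ → ℝ := fun θ => p₂ θ / deriv p₂ θ with hg
  have hcder : Continuous (deriv p₂) := hp₂.continuous_deriv le_rfl
  have hgcont : ContinuousOn g (Set.Icc a b) :=
    (hp₂.continuous.continuousOn).div hcder.continuousOn hne
  have hG : ∀ θ ∈ Set.Icc a b, HasDerivAt (fun x => ∫ α in a..x, g α) (g θ) θ := by
    intro θ hθ
    have hint : IntervalIntegrable g MeasureTheory.volume a θ := by
      apply ContinuousOn.intervalIntegrable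
      apply hgcont.mono
      rw [Set.uIcc_of_le hθ.1]
      exact Set.Icc_subset_Icc le_rfl hθ.2
    have hmeas : StronglyMeasurableAtFilter g (nhds θ) :=
      ((hp₂.continuous.measurable.div hcder.measurable).stronglyMeasurable).stronglyMeasurableAtFilter
    have hct : ContinuousAt g θ :=
      hp₂.continuous.continuousAt.div hcder.continuousAt (hne θ hθ)
    exact intervalIntegral.integral_hasDerivAt_right hint hmeas hct
  constructor
  · intro hcomp θ hθ
    set F : ℝ → ℝ := fun x => p₁ x * Real.exp (-(∫ α in a..x, g α)) with hF
    have hFd : ∀ x ∈ Set.Icc a b, HasDerivAt F 0 x := by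
      intro x hx
      have h1 : HasDerivAt (fun y => Real.exp (-(∫ α in a..y, g α)))
          (-(g x) * Real.exp (-(∫ α in a..x, g α))) x := by
        have := ((hG x hx).neg).exp
        refine this.congr_deriv ?_
        simp only [Pi.neg_apply]; ring
      have h2 := ((hp₁ x).hasDerivAt.mul h1)
      have hd1 : deriv p₁ x = p₁ x * g x := by
        have h := hcomp x hx
        have hn := hne x hx
        simp only [hg]; field_simp
        linarith [h]
      refine h2.congr_deriv ?_
      rw [hd1]
      ring
    have hconst := constant_of_has_deriv_right_zero (f := F) (a := a) (b := b)
      (fun x hx => ((hFd x hx).continuousAt).continuousWithinAt)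
      (fun x hx => ((hFd x (Set.Ico_subset_Icc_self hx)).hasDerivWithinAt))
    have hFa : F a = p₁ a := by simp [hF]
    have h := hconst θ hθ
    rw [hFa, hF] at h
    simp only at h
    rw [Real.exp_neg] at h
    have hexp : Real.exp (∫ α in a..θ, g α) ≠ 0 := Real.exp_ne_zero _
    field_simp at h
    linarith [h]
  · intro hform θ hθ
    have hh : HasDerivAt (fun x => p₁ a * Real.exp (∫ α in a..x, g α))
        (p₁ a * Real.exp (∫ α in a..θ, g α) * g θ) θ := by
      have := ((hG θ hθ).exp).const_mul (p₁ a)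
      refine this.congr_deriv ?_
      ring
    have hud : UniqueDiffWithinAt ℝ (Set.Icc a b) θ := uniqueDiffOn_Icc hab θ hθ
    have h1 : HasDerivWithinAt p₁ (p₁ a * Real.exp (∫ α in a..θ, g α) * g θ)
        (Set.Icc a b) θ :=
      (hh.hasDerivWithinAt).congr (fun x hx => hform x hx) (hform θ hθ)
    have h2 : HasDerivWithinAt p₁ (deriv p₁ θ) (Set.Icc a b) θ :=
      (hp₁ θ).hasDerivAt.hasDerivWithinAt
    have hder : deriv p₁ θ = p₁ a * Real.exp (∫ α in a..θ, g α) * g θ := by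
      rw [← h2.derivWithin hud, h1.derivWithin hud]
    have hform' := hform θ hθ
    rw [hder, ← hform']
    have hn := hne θ hθ
    simp only [hg]; field_simp
end
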